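/- σ_A² ≤ σ_U², and equality σ_A² = σ_U² holds if and only if for every z ∈ 𝒵 both π_s β_t(z) + π_t β_s(z) = 0 and (1 − π_t − π_s)(β_t(z) − β_s(z)) = 0. -/

import Mathlib

open MeasureTheory ProbabilityTheory Matrix
open scoped ProbabilityTheory

/-!
Within a stratum `z`, `β_t(z)` solves the normal equations `Σ(z) β = cov(X, Y⁽ᵗ⁾ | z)`, so the
residual variance is `var(Y⁽ᵗ⁾ | z) − β_tᵀ Σ β_t`. Hence `σ_U² − σ_A²` is the `p_z`-weighted sum of
`β_tᵀΣβ_t / π_t + β_sᵀΣβ_s / π_s − (β_t − β_s)ᵀΣ(β_t − β_s)`, and completing the square writes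
this as `‖π_s β_t + π_t β_s‖²_Σ / (π_t π_s (π_t + π_s)) + (1 − π_t − π_s) / (π_t + π_s) ‖β_t − β_s‖²_Σ`.
Both terms are nonnegative since `π_t + π_s ≤ 1`, and by positive definiteness of `Σ` they vanish
exactly under the stated conditions.
-/

lemma MeasureTheory.MemLp.cond {Ω E : Type*} [MeasurableSpace Ω] [NormedAddCommGroup E]
    {μ : Measure Ω} {s : Set Ω} {f : Ω → E} {p : ENNReal} (hf : MemLp f p μ) (hs : μ s ≠ 0) :
    MemLp f p μ[|s] :=
  (hf.restrict s).smul_measure (ENNReal.inv_ne_top.mpr hs)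

section Regression

variable {Ω ι : Type*} [MeasurableSpace Ω] [Fintype ι]

noncomputable def covMatrix (X : ι → Ω → ℝ) (μ : Measure Ω) : Matrix ι ι ℝ :=
  Matrix.of fun i j => cov[X i, X j; μ]

variable {μ : Measure Ω} [IsFiniteMeasure μ] {Y : Ω → ℝ} {X : ι → Ω → ℝ}

lemma variance_sub_sum_mul (hY : MemLp Y 2 μ) (hX : ∀ j, MemLp (X j) 2 μ) (b : ι → ℝ) :
    Var[fun ω => Y ω - ∑ j, X j ω * b j; μ]
      = Var[Y; μ] - 2 * b ⬝ᵥ (fun j => cov[X j, Y; μ]) + b ⬝ᵥ (covMatrix X μ *ᵥ b) := by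
  have hXb : ∀ j, MemLp (fun ω => X j ω * b j) 2 μ := fun j => (hX j).mul_const (b j)
  rw [variance_fun_sub hY (memLp_finsetSum _ fun j _ => hXb j), covariance_fun_sum_right hXb hY,
    variance_fun_sum hXb]
  simp only [covariance_mul_const_left, covariance_mul_const_right, covariance_comm Y,
    dotProduct, mulVec, covMatrix, of_apply, Finset.mul_sum]
  ring_nf
  ac_rfl

lemma variance_sub_sum_mul_of_mulVec_eq (hY : MemLp Y 2 μ) (hX : ∀ j, MemLp (X j) 2 μ)
    {b : ι → ℝ} (hb : covMatrix X μ *ᵥ b = fun j => cov[X j, Y; μ]) :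
    Var[fun ω => Y ω - ∑ j, X j ω * b j; μ] = Var[Y; μ] - b ⬝ᵥ (covMatrix X μ *ᵥ b) := by
  rw [variance_sub_sum_mul hY hX, ← hb]
  ring

end Regression

lemma variance_sub_sum_mul_of_eq_inv_mulVec {Ω ι : Type*} [MeasurableSpace Ω] [Fintype ι]
    [DecidableEq ι] {μ : Measure Ω} [IsProbabilityMeasure μ] {Y : Ω → ℝ} {X : Ω → ι → ℝ}
    (hY : MemLp Y 2 μ) (hX : ∀ j, MemLp (fun ω => X ω j) 2 μ) {S : Matrix ι ι ℝ}
    (hS : ∀ j l, S j l = ∫ ω, X ω j * X ω l ∂μ - (∫ ω, X ω j ∂μ) * ∫ ω, X ω l ∂μ)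
    (hSdet : IsUnit S.det) {b : ι → ℝ}
    (hb : b = S⁻¹ *ᵥ fun j => ∫ ω, X ω j * Y ω ∂μ - (∫ ω, X ω j ∂μ) * ∫ ω, Y ω ∂μ) :
    Var[fun ω => Y ω - ∑ j, X ω j * b j; μ] = Var[Y; μ] - b ⬝ᵥ (S *ᵥ b) := by
  have hScov : S = covMatrix (fun j ω => X ω j) μ := by
    ext j l
    rw [hS, covMatrix, of_apply, covariance_eq_sub (hX j) (hX l)]
    rfl
  have hSb : S *ᵥ b = fun j => cov[fun ω => X ω j, Y; μ] := by
    rw [hb, mulVec_mulVec, mul_nonsing_inv _ hSdet, one_mulVec]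
    ext j
    rw [covariance_eq_sub (hX j) hY]
    rfl
  rw [hScov] at hSb ⊢
  exact variance_sub_sum_mul_of_mulVec_eq hY hX hSb

section AdjustmentGain

variable {ι : Type*} [Fintype ι]

lemma Matrix.PosDef.dotProduct_mulVec_self_eq_zero_iff {S : Matrix ι ι ℝ} (hS : S.PosDef)
    {v : ι → ℝ} : v ⬝ᵥ (S *ᵥ v) = 0 ↔ v = 0 := by
  refine ⟨fun h => ?_, fun h => by simp [h]⟩
  by_contra hv
  simpa [h] using hS.dotProduct_mulVec_pos hv

lemma Matrix.PosDef.dotProduct_mulVec_self_nonneg {S : Matrix ι ι ℝ} (hS : S.PosDef)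
    (v : ι → ℝ) : 0 ≤ v ⬝ᵥ (S *ᵥ v) := by
  simpa using hS.posSemidef.dotProduct_mulVec_nonneg v

/-- The reduction of `σ_U² − σ_A²` contributed by one stratum. -/
noncomputable def adjustmentGain (S : Matrix ι ι ℝ) (p q : ℝ) (a b : ι → ℝ) : ℝ :=
  a ⬝ᵥ (S *ᵥ a) / p + b ⬝ᵥ (S *ᵥ b) / q - (a - b) ⬝ᵥ (S *ᵥ (a - b))

lemma adjustmentGain_eq {S : Matrix ι ι ℝ} (hS : S.IsHermitian) {p q : ℝ} (hp : p ≠ 0)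
    (hq : q ≠ 0) (hpq : p + q ≠ 0) (a b : ι → ℝ) :
    adjustmentGain S p q a b
      = (q • a + p • b) ⬝ᵥ (S *ᵥ (q • a + p • b)) / (p * q * (p + q))
        + (1 - p - q) / (p + q) * ((a - b) ⬝ᵥ (S *ᵥ (a - b))) := by
  have hab : b ⬝ᵥ (S *ᵥ a) = a ⬝ᵥ (S *ᵥ b) := by
    rw [dotProduct_mulVec, ← mulVec_transpose, dotProduct_comm,
      ← conjTranspose_eq_transpose_of_trivial, hS.eq]
  simp only [adjustmentGain, mulVec_add, mulVec_smul, mulVec_sub, add_dotProduct,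
    smul_dotProduct, dotProduct_add, dotProduct_smul, sub_dotProduct, dotProduct_sub,
    smul_eq_mul, hab]
  field_simp
  ring

variable {S : Matrix ι ι ℝ} {p q : ℝ} {a b : ι → ℝ}

lemma adjustmentGain_nonneg (hS : S.PosDef) (hp : 0 < p) (hq : 0 < q) (hpq : p + q ≤ 1) :
    0 ≤ adjustmentGain S p q a b := by
  rw [adjustmentGain_eq hS.isHermitian hp.ne' hq.ne' (by positivity)]
  exact add_nonneg (div_nonneg (hS.dotProduct_mulVec_self_nonneg _) (by positivity))
    (mul_nonneg (div_nonneg (by linarith) (by positivity)) (hS.dotProduct_mulVec_self_nonneg _))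

lemma adjustmentGain_eq_zero_iff (hS : S.PosDef) (hp : 0 < p) (hq : 0 < q) (hpq : p + q ≤ 1) :
    adjustmentGain S p q a b = 0 ↔ q • a + p • b = 0 ∧ (1 - p - q) • (a - b) = 0 := by
  rw [adjustmentGain_eq hS.isHermitian hp.ne' hq.ne' (by positivity),
    add_eq_zero_iff_of_nonneg
      (div_nonneg (hS.dotProduct_mulVec_self_nonneg _) (by positivity))
      (mul_nonneg (div_nonneg (by linarith) (by positivity)) (hS.dotProduct_mulVec_self_nonneg _)),
    smul_eq_zero]
  have hpq₀ : p + q ≠ 0 := by positivity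
  simp only [div_eq_zero_iff, mul_eq_zero, hS.dotProduct_mulVec_self_eq_zero_iff, hp.ne',
    hq.ne', hpq₀, or_false]

end AdjustmentGain

theorem stmt5_general {Ω : Type*} [MeasurableSpace Ω] (P : Measure Ω) [IsProbabilityMeasure P]
    {𝓩 : Type*} [Fintype 𝓩]
    {k d : ℕ}
    (π : Fin k → ℝ) (hπ : ∀ t, π t ∈ Set.Ioo (0 : ℝ) 1) (hπsum : ∑ t, π t = 1)
    (Y : Fin k → Ω → ℝ)
    (hY2 : ∀ t, MemLp (Y t) 2 P)
    (Z : Ω → 𝓩)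
    (hZpos : ∀ z, 0 < P {ω | Z ω = z})
    (X : Ω → Fin d → ℝ)
    (hX2 : ∀ j, MemLp (fun ω => X ω j) 2 P)
    -- conditional measures and stratum probabilities
    (condP : 𝓩 → Measure Ω) (hcondP : ∀ z, condP z = P[|{ω | Z ω = z}])
    (pz : 𝓩 → ℝ) (hpz : ∀ z, pz z = (P {ω | Z ω = z}).toReal)
    -- conditional covariance matrices, assumed positive definite
    (Smat : 𝓩 → Matrix (Fin d) (Fin d) ℝ)
    (hSmat : ∀ z j l, Smat z j l
      = ∫ ω, X ω j * X ω l ∂(condP z)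
        - (∫ ω, X ω j ∂(condP z)) * (∫ ω, X ω l ∂(condP z)))
    (hSpd : ∀ z, (Smat z).PosDef)
    -- projection coefficients
    (β : Fin k → 𝓩 → Fin d → ℝ)
    (hβ : ∀ t z, β t z = (Smat z)⁻¹ *ᵥ fun j =>
      ∫ ω, X ω j * Y t ω ∂(condP z)
        - (∫ ω, X ω j ∂(condP z)) * (∫ ω, Y t ω ∂(condP z)))
    -- the two fixed treatments
    (tt ss : Fin k) (hts : tt ≠ ss)
    -- the asymptotic variance components
    (σU2 σA2 : ℝ)
    (hσU2 : σU2 = ∑ z, pz z *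
      (variance (Y tt) (condP z) / π tt + variance (Y ss) (condP z) / π ss))
    (hσA2 : σA2
      = (∑ z, pz z *
          (variance (fun ω => Y tt ω - ∑ j, X ω j * β tt z j) (condP z) / π tt
            + variance (fun ω => Y ss ω - ∑ j, X ω j * β ss z j) (condP z) / π ss))
        + ∑ z, pz z *
            ((β tt z - β ss z) ⬝ᵥ (Smat z *ᵥ (β tt z - β ss z)))) :
    σA2 ≤ σU2 ∧
      (σA2 = σU2 ↔ ∀ z,
        π ss • β tt z + π tt • β ss z = 0
          ∧ (1 - π tt - π ss) • (β tt z - β ss z) = 0) := by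
  have hπts : π tt + π ss ≤ 1 :=
    hπsum ▸ Finset.add_le_sum (fun t _ => (hπ t).1.le) (Finset.mem_univ _) (Finset.mem_univ _) hts
  have hZ₀ (z : 𝓩) : P {ω | Z ω = z} ≠ 0 := (hZpos z).ne'
  have hpz₀ (z : 𝓩) : 0 < pz z := hpz z ▸ ENNReal.toReal_pos (hZ₀ z) (measure_ne_top _ _)
  have (z : 𝓩) : IsProbabilityMeasure (condP z) := hcondP z ▸ cond_isProbabilityMeasure (hZ₀ z)
  have hvar (t : Fin k) (z : 𝓩) :
      variance (fun ω => Y t ω - ∑ j, X ω j * β t z j) (condP z)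
        = variance (Y t) (condP z) - β t z ⬝ᵥ (Smat z *ᵥ β t z) :=
    variance_sub_sum_mul_of_eq_inv_mulVec (hcondP z ▸ (hY2 t).cond (hZ₀ z))
      (fun j => hcondP z ▸ (hX2 j).cond (hZ₀ z)) (hSmat z)
      ((isUnit_iff_isUnit_det _).mp (hSpd z).isUnit) (hβ t z)
  have hgap : σU2 - σA2
      = ∑ z, pz z * adjustmentGain (Smat z) (π tt) (π ss) (β tt z) (β ss z) := by
    simp only [hσU2, hσA2, hvar, adjustmentGain, ← Finset.sum_add_distrib,
      ← Finset.sum_sub_distrib]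
    exact Finset.sum_congr rfl fun z _ => by ring
  have hterm (z : 𝓩) : 0 ≤ pz z * adjustmentGain (Smat z) (π tt) (π ss) (β tt z) (β ss z) :=
    mul_nonneg (hpz₀ z).le (adjustmentGain_nonneg (hSpd z) (hπ tt).1 (hπ ss).1 hπts)
  refine ⟨sub_nonneg.mp (hgap ▸ Finset.sum_nonneg fun z _ => hterm z), ?_⟩
  rw [eq_comm, ← sub_eq_zero, hgap, Finset.sum_eq_zero_iff_of_nonneg fun z _ => hterm z]
  simp only [Finset.mem_univ, true_imp_iff, mul_eq_zero, (hpz₀ _).ne', false_or,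
    adjustmentGain_eq_zero_iff (hSpd _) (hπ tt).1 (hπ ss).1 hπts]

/-- In the population setup, `σA² ≤ σU²`, with equality iff for every
stratum `z` both `πs β_t(z) + πt β_s(z) = 0` and `(1 − πt − πs)(β_t(z) − β_s(z)) = 0`. -/
theorem stmt5 {Ω : Type*} [MeasurableSpace Ω] (P : Measure Ω) [IsProbabilityMeasure P]
    {𝓦 : Type*} [MeasurableSpace 𝓦]
    {𝓩 : Type*} [Fintype 𝓩] [MeasurableSpace 𝓩] [MeasurableSingletonClass 𝓩]
    {k d : ℕ} (hk : 2 ≤ k)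
    (π : Fin k → ℝ) (hπ : ∀ t, π t ∈ Set.Ioo (0 : ℝ) 1) (hπsum : ∑ t, π t = 1)
    (Y : Fin k → Ω → ℝ) (W : Ω → 𝓦)
    (hYmeas : ∀ t, Measurable (Y t)) (hWmeas : Measurable W)
    (hY2 : ∀ t, MemLp (Y t) 2 P)
    (g : 𝓦 → 𝓩) (hg : Measurable g)
    (Z : Ω → 𝓩) (hZdef : ∀ ω, Z ω = g (W ω))
    (hZpos : ∀ z, 0 < P {ω | Z ω = z})
    (h : 𝓦 → Fin d → ℝ) (hh : Measurable h)
    (X : Ω → Fin d → ℝ) (hXdef : ∀ ω, X ω = h (W ω))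
    (hX2 : ∀ j, MemLp (fun ω => X ω j) 2 P)
    (hXY2 : ∀ t j, MemLp (fun ω => X ω j * Y t ω) 2 P)
    -- conditional measures and stratum probabilities
    (condP : 𝓩 → Measure Ω) (hcondP : ∀ z, condP z = P[|{ω | Z ω = z}])
    (pz : 𝓩 → ℝ) (hpz : ∀ z, pz z = (P {ω | Z ω = z}).toReal)
    -- conditional covariance matrices, assumed positive definite
    (Smat : 𝓩 → Matrix (Fin d) (Fin d) ℝ)
    (hSmat : ∀ z j l, Smat z j l
      = ∫ ω, X ω j * X ω l ∂(condP z)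
        - (∫ ω, X ω j ∂(condP z)) * (∫ ω, X ω l ∂(condP z)))
    (hSpd : ∀ z, (Smat z).PosDef)
    -- projection coefficients
    (β : Fin k → 𝓩 → Fin d → ℝ)
    (hβ : ∀ t z, β t z = (Smat z)⁻¹ *ᵥ fun j =>
      ∫ ω, X ω j * Y t ω ∂(condP z)
        - (∫ ω, X ω j ∂(condP z)) * (∫ ω, Y t ω ∂(condP z)))
    -- the two fixed treatments
    (tt ss : Fin k) (hts : tt ≠ ss)
    -- the asymptotic variance components
    (σU2 σA2 : ℝ)
    (hσU2 : σU2 = ∑ z, pz z *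
      (variance (Y tt) (condP z) / π tt + variance (Y ss) (condP z) / π ss))
    (hσA2 : σA2
      = (∑ z, pz z *
          (variance (fun ω => Y tt ω - ∑ j, X ω j * β tt z j) (condP z) / π tt
            + variance (fun ω => Y ss ω - ∑ j, X ω j * β ss z j) (condP z) / π ss))
        + ∑ z, pz z *
            ((β tt z - β ss z) ⬝ᵥ (Smat z *ᵥ (β tt z - β ss z)))) :
    σA2 ≤ σU2 ∧
      (σA2 = σU2 ↔ ∀ z,
        π ss • β tt z + π tt • β ss z = 0
          ∧ (1 - π tt - π ss) • (β tt z - β ss z) = 0) :=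
  stmt5_general P π hπ hπsum Y hY2 Z hZpos X hX2 condP hcondP pz hpz Smat hSmat hSpd β hβ tt ss hts
    σU2 σA2 hσU2 hσA2
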